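/- arXiv:1803.01427 — 3 statements merged into one kernel-verified Lean document; each statement's English description precedes it below -/
import Mathlib

section
/- Let 𝔤 be a finite-dimensional real Lie algebra and 𝔤* its dual space. For a smooth function f : 𝔤* → ℝ and μ ∈ 𝔤*, let δf/δμ ∈ 𝔤 denote the unique element such that Df(μ)(ν) = ν(δf/δμ) for all ν ∈ 𝔤* (this exists and is unique since 𝔤 is finite dimensional). Define the Lie-Poisson bracket {f, g}(μ) = −⟨μ, [δf/δμ, δg/δμ]⟩. Then for all smooth functions f, g, h : 𝔤* → ℝ, the Jacobi identity holds: {{f, g}, h} + {{h, f}, g} + {{g, h}, f} = 0. -/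
open Matrix

/-- The Euclidean gradient of `f : ℝⁿ → ℝ` at `μ`.  Identifying a finite-dimensional
real Lie algebra `𝔤` with `ℝⁿ` via a basis and `𝔤*` with `ℝⁿ` via the dual basis (so
that the duality pairing becomes the dot product), `grad f μ` is exactly the functional
derivative `δf/δμ ∈ 𝔤`, i.e. the unique element with `Df(μ)(ν) = ν(δf/δμ)` for all
`ν ∈ 𝔤*`. -/
noncomputable def grad {n : ℕ} (f : (Fin n → ℝ) → ℝ) (μ : Fin n → ℝ) : Fin n → ℝ :=
  fun i => fderiv ℝ f μ (Pi.single i 1)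

/-- The Lie–Poisson (Kirillov–Kostant–Souriau) bracket on `𝔤* ≅ ℝⁿ` associated to a Lie
bracket `br` on `𝔤 ≅ ℝⁿ`:  `{f, g}(μ) = −⟨μ, [δf/δμ, δg/δμ]⟩`. -/
noncomputable def liePoissonBracket {n : ℕ}
    (br : (Fin n → ℝ) →ₗ[ℝ] (Fin n → ℝ) →ₗ[ℝ] (Fin n → ℝ))
    (f g : (Fin n → ℝ) → ℝ) (μ : Fin n → ℝ) : ℝ :=
  -(μ ⬝ᵥ br (grad f μ) (grad g μ))

section LiePoissonAux

variable {n : ℕ}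

/-- A linear functional on `ℝⁿ` is given by dot product with the vector of its values
on the standard basis. -/
private lemma lin_eq_dot (φ : (Fin n → ℝ) →ₗ[ℝ] ℝ) (v : Fin n → ℝ) :
    φ v = v ⬝ᵥ (fun i => φ (Pi.single i 1)) := by
  have hv : v = ∑ i, v i • (Pi.single i 1 : Fin n → ℝ) := by
    funext j
    simp [Finset.sum_apply, Pi.single_apply]
  conv_lhs => rw [hv]
  rw [map_sum]
  simp [dotProduct]

private lemma clm_eq_dot (φ : (Fin n → ℝ) →L[ℝ] ℝ) (v : Fin n → ℝ) :
    φ v = v ⬝ᵥ (fun i => φ (Pi.single i 1)) :=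
  lin_eq_dot (φ : (Fin n → ℝ) →ₗ[ℝ] ℝ) v

/-- Dot product with `μ` as a linear map. -/
private def dotL (μ : Fin n → ℝ) : (Fin n → ℝ) →ₗ[ℝ] ℝ where
  toFun w := μ ⬝ᵥ w
  map_add' x y := by simp [dotProduct, Finset.sum_add_distrib, mul_add]
  map_smul' c x := by simp [dotProduct, Finset.mul_sum]; ring_nf; simp [mul_comm, mul_left_comm]

private lemma dotL_apply (μ w : Fin n → ℝ) : dotL μ w = μ ⬝ᵥ w := rfl

/-- The dot product as a continuous bilinear map. -/
private noncomputable def dotC : (Fin n → ℝ) →L[ℝ] (Fin n → ℝ) →L[ℝ] ℝ :=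
  LinearMap.toContinuousLinearMap
    { toFun := fun μ => LinearMap.toContinuousLinearMap (dotL μ)
      map_add' := by intros x y; ext w; simp [dotL_apply, add_dotProduct]
      map_smul' := by intros c x; ext w; simp [dotL_apply, smul_dotProduct] }

@[simp] private lemma dotC_apply (μ w : Fin n → ℝ) : dotC μ w = μ ⬝ᵥ w := rfl

/-- The Lie bracket as a continuous bilinear map. -/
private noncomputable def brC (br : (Fin n → ℝ) →ₗ[ℝ] (Fin n → ℝ) →ₗ[ℝ] (Fin n → ℝ)) :
    (Fin n → ℝ) →L[ℝ] (Fin n → ℝ) →L[ℝ] (Fin n → ℝ) :=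
  LinearMap.toContinuousLinearMap
    { toFun := fun ξ => LinearMap.toContinuousLinearMap (br ξ)
      map_add' := by intros x y; ext w; simp
      map_smul' := by intros c x; ext w; simp }

@[simp] private lemma brC_apply (br : (Fin n → ℝ) →ₗ[ℝ] (Fin n → ℝ) →ₗ[ℝ] (Fin n → ℝ))
    (ξ η : Fin n → ℝ) : brC br ξ η = br ξ η := rfl

/-- Evaluation of a functional on the standard basis, as a continuous linear map. -/
private noncomputable def evalB : ((Fin n → ℝ) →L[ℝ] ℝ) →L[ℝ] (Fin n → ℝ) :=
  ContinuousLinearMap.pi (fun i => ContinuousLinearMap.apply ℝ ℝ (Pi.single i 1))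

@[simp] private lemma evalB_apply (φ : (Fin n → ℝ) →L[ℝ] ℝ) (i : Fin n) :
    evalB φ i = φ (Pi.single i 1) := rfl

end LiePoissonAux

section LiePoissonLemmas

variable {n : ℕ}

private lemma grad_eq (f : (Fin n → ℝ) → ℝ) : grad f = fun x => evalB (fderiv ℝ f x) := by
  funext x i
  rfl

private lemma fderiv_eq_dot_grad (F : (Fin n → ℝ) → ℝ) (μ v : Fin n → ℝ) :
    fderiv ℝ F μ v = v ⬝ᵥ grad F μ :=
  clm_eq_dot (fderiv ℝ F μ) v

/-- Symmetry of the second derivative of a smooth function. -/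
private lemma hess_symm (f : (Fin n → ℝ) → ℝ) (hf : ContDiff ℝ (⊤ : ℕ∞) f) (μ v w : Fin n → ℝ) :
    fderiv ℝ (fun x => fderiv ℝ f x) μ v w = fderiv ℝ (fun x => fderiv ℝ f x) μ w v :=
  second_derivative_symmetric (fun y => (hf.differentiable (by simp) y).hasFDerivAt)
    (((hf.fderiv_right (m := (⊤ : ℕ∞)) (by simp)).differentiable (by simp) μ).hasFDerivAt) v w

/-- The explicit formula for the derivative of the Lie-Poisson bracket. -/
private lemma fderiv_lpb (br : (Fin n → ℝ) →ₗ[ℝ] (Fin n → ℝ) →ₗ[ℝ] (Fin n → ℝ))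
    (f g : (Fin n → ℝ) → ℝ) (hf : ContDiff ℝ (⊤ : ℕ∞) f) (hg : ContDiff ℝ (⊤ : ℕ∞) g) (μ v : Fin n → ℝ) :
    fderiv ℝ (liePoissonBracket br f g) μ v =
      -(v ⬝ᵥ br (grad f μ) (grad g μ))
      - μ ⬝ᵥ br (evalB (fderiv ℝ (fun x => fderiv ℝ f x) μ v)) (grad g μ)
      - μ ⬝ᵥ br (grad f μ) (evalB (fderiv ℝ (fun x => fderiv ℝ g x) μ v)) := by
  have hf' : ContDiff ℝ (⊤ : ℕ∞) (fun x => fderiv ℝ f x) := hf.fderiv_right (by simp)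
  have hg' : ContDiff ℝ (⊤ : ℕ∞) (fun x => fderiv ℝ g x) := hg.fderiv_right (by simp)
  have hGf : HasFDerivAt (grad f)
      ((evalB).comp (fderiv ℝ (fun x => fderiv ℝ f x) μ)) μ := by
    rw [grad_eq]
    exact (evalB.hasFDerivAt).comp μ ((hf'.differentiable (by simp) μ).hasFDerivAt)
  have hGg : HasFDerivAt (grad g)
      ((evalB).comp (fderiv ℝ (fun x => fderiv ℝ g x) μ)) μ := by
    rw [grad_eq]
    exact (evalB.hasFDerivAt).comp μ ((hg'.differentiable (by simp) μ).hasFDerivAt)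
  have hc : HasFDerivAt (fun x => (brC br) (grad f x))
      ((brC br).comp ((evalB).comp (fderiv ℝ (fun x => fderiv ℝ f x) μ))) μ :=
    ((brC br).hasFDerivAt).comp μ hGf
  have hw := hc.clm_apply hGg
  have hF := ((dotC (n := n)).hasFDerivAt).clm_apply hw
  have heq : liePoissonBracket br f g =
      -fun x => (dotC x (brC br (grad f x) (grad g x))) := by
    funext x
    simp [liePoissonBracket]
  have hF' : HasFDerivAt (liePoissonBracket br f g) _ μ := heq ▸ hF.neg
  rw [hF'.fderiv]
  simp only [ContinuousLinearMap.neg_apply, ContinuousLinearMap.add_apply,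
    ContinuousLinearMap.coe_comp', Function.comp_apply, ContinuousLinearMap.flip_apply,
    dotC_apply, brC_apply, map_add, dotProduct_add]
  ring

/-- The coadjoint-type vector `T_s(μ)ⱼ = ⟨μ, [eⱼ, δs/δμ]⟩`. -/
private noncomputable def Tvec (br : (Fin n → ℝ) →ₗ[ℝ] (Fin n → ℝ) →ₗ[ℝ] (Fin n → ℝ))
    (s : (Fin n → ℝ) → ℝ) (μ : Fin n → ℝ) : Fin n → ℝ :=
  fun j => μ ⬝ᵥ br (Pi.single j 1) (grad s μ)

/-- Expansion of an iterated Lie-Poisson bracket into a first-order (Jacobi) term and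
two symmetric Hessian terms. -/
private lemma lpb_expand (br : (Fin n → ℝ) →ₗ[ℝ] (Fin n → ℝ) →ₗ[ℝ] (Fin n → ℝ))
    (br_alt : ∀ ξ, br ξ ξ = 0)
    (p q r : (Fin n → ℝ) → ℝ)
    (hp : ContDiff ℝ (⊤ : ℕ∞) p) (hq : ContDiff ℝ (⊤ : ℕ∞) q) (μ : Fin n → ℝ) :
    liePoissonBracket br (liePoissonBracket br p q) r μ =
      μ ⬝ᵥ br (br (grad p μ) (grad q μ)) (grad r μ)
      + fderiv ℝ (fun x => fderiv ℝ p x) μ (Tvec br r μ) (Tvec br q μ)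
      - fderiv ℝ (fun x => fderiv ℝ q x) μ (Tvec br r μ) (Tvec br p μ) := by
  have anti : ∀ a b : Fin n → ℝ, br a b = -br b a := by
    intro a b
    have h := br_alt (a + b)
    simp [map_add, br_alt a, br_alt b] at h
    rw [eq_neg_iff_add_eq_zero, add_comm]
    exact h
  have rep : ∀ u w : Fin n → ℝ,
      μ ⬝ᵥ br w u = w ⬝ᵥ (fun j => μ ⬝ᵥ br (Pi.single j 1) u) := by
    intro u w
    simpa [dotL_apply, LinearMap.comp_apply, LinearMap.flip_apply] using
      lin_eq_dot ((dotL μ).comp (br.flip u)) w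
  have step1 : liePoissonBracket br (liePoissonBracket br p q) r μ
      = -(fderiv ℝ (liePoissonBracket br p q) μ (Tvec br r μ)) := by
    show -(μ ⬝ᵥ br (grad (liePoissonBracket br p q) μ) (grad r μ)) = _
    rw [rep, fderiv_eq_dot_grad, dotProduct_comm]
    rfl
  rw [step1, fderiv_lpb br p q hp hq μ (Tvec br r μ)]
  have h1 : (Tvec br r μ) ⬝ᵥ br (grad p μ) (grad q μ)
      = μ ⬝ᵥ br (br (grad p μ) (grad q μ)) (grad r μ) := by
    rw [rep, dotProduct_comm]
    rfl
  have h2 : μ ⬝ᵥ br (evalB (fderiv ℝ (fun x => fderiv ℝ p x) μ (Tvec br r μ))) (grad q μ)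
      = fderiv ℝ (fun x => fderiv ℝ p x) μ (Tvec br r μ) (Tvec br q μ) := by
    rw [rep, dotProduct_comm]
    exact (clm_eq_dot (fderiv ℝ (fun x => fderiv ℝ p x) μ (Tvec br r μ)) (Tvec br q μ)).symm
  have h3 : μ ⬝ᵥ br (grad p μ) (evalB (fderiv ℝ (fun x => fderiv ℝ q x) μ (Tvec br r μ)))
      = -(fderiv ℝ (fun x => fderiv ℝ q x) μ (Tvec br r μ) (Tvec br p μ)) := by
    rw [anti, dotProduct_neg, rep, dotProduct_comm]
    exact congrArg Neg.neg
      (clm_eq_dot (fderiv ℝ (fun x => fderiv ℝ q x) μ (Tvec br r μ)) (Tvec br p μ)).symm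
  rw [h2, h3]
  have h1' : Tvec br r μ ⬝ᵥ (br (grad p μ)) (grad q μ)
      = μ ⬝ᵥ (br ((br (grad p μ)) (grad q μ))) (grad r μ) := h1
  linarith [h1']

end LiePoissonLemmas

/-- On the dual of a finite-dimensional real Lie algebra (presented as `ℝⁿ` with a
bilinear, alternating bracket `br` satisfying the Jacobi identity), the Lie–Poisson
bracket `{f, g}(μ) = −⟨μ, [δf/δμ, δg/δμ]⟩` satisfies the Jacobi identity on smooth
functions. -/
theorem liePoisson_jacobi {n : ℕ}
    (br : (Fin n → ℝ) →ₗ[ℝ] (Fin n → ℝ) →ₗ[ℝ] (Fin n → ℝ))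
    (br_alt : ∀ ξ, br ξ ξ = 0)
    (br_jacobi : ∀ ξ η ζ, br (br ξ η) ζ + br (br ζ ξ) η + br (br η ζ) ξ = 0)
    (f g h : (Fin n → ℝ) → ℝ)
    (hf : ContDiff ℝ (⊤ : ℕ∞) f) (hg : ContDiff ℝ (⊤ : ℕ∞) g) (hh : ContDiff ℝ (⊤ : ℕ∞) h) :
    ∀ μ : Fin n → ℝ,
      liePoissonBracket br (liePoissonBracket br f g) h μ +
      liePoissonBracket br (liePoissonBracket br h f) g μ +
      liePoissonBracket br (liePoissonBracket br g h) f μ = 0 := by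
  intro μ
  rw [lpb_expand br br_alt f g h hf hg μ, lpb_expand br br_alt h f g hh hf μ,
    lpb_expand br br_alt g h f hg hh μ]
  have hμ : μ ⬝ᵥ br (br (grad f μ) (grad g μ)) (grad h μ)
      + μ ⬝ᵥ br (br (grad h μ) (grad f μ)) (grad g μ)
      + μ ⬝ᵥ br (br (grad g μ) (grad h μ)) (grad f μ) = 0 := by
    rw [← dotProduct_add, ← dotProduct_add, br_jacobi (grad f μ) (grad g μ) (grad h μ)]
    simp [dotProduct]
  linarith [hμ,
    hess_symm f hf μ (Tvec br g μ) (Tvec br h μ),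
    hess_symm g hg μ (Tvec br f μ) (Tvec br h μ),
    hess_symm h hh μ (Tvec br f μ) (Tvec br g μ)]
end

section
/- Let Π₁ : ℝ^{m₁} → M_{m₁}(ℝ) and Π₂ : ℝ^{m₂} → M_{m₂}(ℝ) be matrix-valued maps and φ : ℝ^{m₁} → ℝ^{m₂} a differentiable map. Then φ is a Poisson map (Dφ(z) Π₁(z) Dφ(z)ᵀ = Π₂(φ(z)) for all z) if and only if the graph of φ is coisotropic for the product structure (−Π₁) ⊕ Π₂ in the following sense: for every z ∈ ℝ^{m₁} and every pair (α, β) ∈ ℝ^{m₁} × ℝ^{m₂} annihilating the tangent space of the graph at (z, φ(z)) — i.e. α·v + β·(Dφ(z)v) = 0 for all v ∈ ℝ^{m₁} — there exists v ∈ ℝ^{m₁} with (−Π₁(z)α, Π₂(φ(z))β) = (v, Dφ(z)v). -/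
open Matrix

/-- The `m₂ × m₁` Jacobian matrix of `φ : ℝ^{m₁} → ℝ^{m₂}` at `z`. -/
noncomputable def jacobian {m₁ m₂ : ℕ} (φ : (Fin m₁ → ℝ) → (Fin m₂ → ℝ)) (z : Fin m₁ → ℝ) :
    Matrix (Fin m₂) (Fin m₁) ℝ :=
  Matrix.of fun i j => fderiv ℝ φ z (Pi.single j 1) i

/-- A differentiable map `φ : (ℝ^{m₁}, Π₁) → (ℝ^{m₂}, Π₂)` is a Poisson map iff its
graph is coisotropic for the product structure `(−Π₁) ⊕ Π₂`: every covector `(α, β)`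
annihilating the tangent space `{(v, Dφ(z)v)}` of the graph is sent by the structure map
`(α, β) ↦ (−Π₁(z)α, Π₂(φ(z))β)` into that tangent space. -/
theorem poisson_map_iff_graph_coisotropic {m₁ m₂ : ℕ}
    (P₁ : (Fin m₁ → ℝ) → Matrix (Fin m₁) (Fin m₁) ℝ)
    (P₂ : (Fin m₂ → ℝ) → Matrix (Fin m₂) (Fin m₂) ℝ)
    (φ : (Fin m₁ → ℝ) → (Fin m₂ → ℝ)) (hφ : Differentiable ℝ φ) :
    (∀ z : Fin m₁ → ℝ, jacobian φ z * P₁ z * (jacobian φ z)ᵀ = P₂ (φ z)) ↔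
    (∀ (z : Fin m₁ → ℝ) (α : Fin m₁ → ℝ) (β : Fin m₂ → ℝ),
      (∀ v : Fin m₁ → ℝ, α ⬝ᵥ v + β ⬝ᵥ (jacobian φ z *ᵥ v) = 0) →
      ∃ v : Fin m₁ → ℝ, -(P₁ z *ᵥ α) = v ∧ P₂ (φ z) *ᵥ β = jacobian φ z *ᵥ v) := by
  constructor
  · intro h z α β hann
    have hα : α = -((jacobian φ z)ᵀ *ᵥ β) := by
      funext j
      have h1 := hann (Pi.single j 1)
      simp only [dotProduct_single, mul_one, dotProduct_mulVec] at h1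
      have h2 : (β ᵥ* jacobian φ z) j = ((jacobian φ z)ᵀ *ᵥ β) j := by
        simp [Matrix.mulVec_transpose]
      rw [h2] at h1
      simp only [Pi.neg_apply]
      linarith
    refine ⟨-(P₁ z *ᵥ α), rfl, ?_⟩
    calc P₂ (φ z) *ᵥ β = (jacobian φ z * P₁ z * (jacobian φ z)ᵀ) *ᵥ β := by rw [h z]
      _ = jacobian φ z *ᵥ (P₁ z *ᵥ ((jacobian φ z)ᵀ *ᵥ β)) := by
          simp [Matrix.mulVec_mulVec, Matrix.mul_assoc]
      _ = jacobian φ z *ᵥ (-(P₁ z *ᵥ α)) := by rw [hα]; simp [Matrix.mulVec_neg]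
  · intro h z
    ext i j
    have key : ∀ β : Fin m₂ → ℝ,
        (jacobian φ z * P₁ z * (jacobian φ z)ᵀ) *ᵥ β = P₂ (φ z) *ᵥ β := by
      intro β
      obtain ⟨v, hv1, hv2⟩ := h z (-((jacobian φ z)ᵀ *ᵥ β)) β (by
        intro v
        simp [dotProduct_mulVec, Matrix.mulVec_transpose, add_comm])
      have hv : v = P₁ z *ᵥ ((jacobian φ z)ᵀ *ᵥ β) := by
        rw [← hv1]; simp [Matrix.mulVec_neg]
      rw [hv2, hv]
      simp [Matrix.mulVec_mulVec, Matrix.mul_assoc]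
    have := congrFun (key (Pi.single j 1)) i
    simpa [Matrix.mulVec_single] using this
end

section
/- Let g₁, g₂, J ∈ M₃(ℝ) with g₁ᵀ g₁ = I (g₁ orthogonal), and suppose the discrete Euler-Poincaré equations for the discrete rigid body hold: J g₁ + J g₂ᵀ = g₁ᵀ J + g₂ J. Define the discrete momenta μ₁ = J g₁ᵀ − g₁ J and μ₂ = J g₂ᵀ − g₂ J. Then the discrete Lie-Poisson (coadjoint) update holds: μ₂ = g₁ᵀ μ₁ g₁. -/
open Matrix

/-- Discrete rigid body: if `g₁` is orthogonal and the discrete Euler–Poincaré equations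
`J g₁ + J g₂ᵀ = g₁ᵀ * J + g₂ J` hold, then the discrete momenta `μₖ = J gₖᵀ − gₖ J`
satisfy the discrete Lie–Poisson (coadjoint) update `μ₂ = g₁ᵀ μ₁ g₁ = Ad*_{g₁} μ₁`. -/
theorem discrete_rigid_body_lie_poisson
    (g₁ g₂ J : Matrix (Fin 3) (Fin 3) ℝ)
    (horth : g₁ᵀ * g₁ = 1)
    (hDEP : J * g₁ + J * g₂ᵀ = g₁ᵀ * J + g₂ * J)
    (μ₁ μ₂ : Matrix (Fin 3) (Fin 3) ℝ)
    (hμ₁ : μ₁ = J * g₁ᵀ - g₁ * J)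
    (hμ₂ : μ₂ = J * g₂ᵀ - g₂ * J) :
    μ₂ = g₁ᵀ * μ₁ * g₁ := by
  have h2 : J * g₂ᵀ = g₁ᵀ * J + g₂ * J - J * g₁ := by rw [eq_sub_iff_add_eq, add_comm]; exact hDEP
  have key : g₁ᵀ * μ₁ * g₁ = g₁ᵀ * J - J * g₁ := by
    rw [hμ₁]
    calc g₁ᵀ * (J * g₁ᵀ - g₁ * J) * g₁
        = g₁ᵀ * (J * (g₁ᵀ * g₁)) - (g₁ᵀ * g₁) * (J * g₁) := by noncomm_ring
      _ = g₁ᵀ * J - J * g₁ := by rw [horth]; noncomm_ring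
  rw [hμ₂, h2, key]; noncomm_ring
end
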